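/- arXiv:2312.08544 — 5 statements merged into one kernel-verified Lean document; each statement's English description precedes it below -/
import Mathlib

section
/- For every natural number D, every ε > 0, every T₀ > 0, and every function f from the primes ≤ D to the unit circle S¹ ⊆ ℂ, there exists a real number T > T₀ such that |p^{iT} − f(p)| ≤ ε for all primes p ≤ D. -/
/-!
Bohr's moment method. Put `F(T) = 1 + ∑ₚ conj (f p) p^{iT}`, a sum of `K` unimodular terms.
Expanding `F(T)^m` multinomially gives an exponential sum whose frequencies `∑ kₚ log p` are
pairwise distinct by unique factorisation, so the mean value of `|F|^{2m}` over long intervals is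
`∑ₖ multinomial(k)²`, which by Cauchy–Schwarz is at least `K^{2m} / (m+1)^K`. Hence
`|F(T)| ≥ K - δ` for arbitrarily large `T` once `m` is large, and by the parallelogram law this
forces every term `conj (f p) p^{iT}` to lie within `2√δ` of the constant term `1`.
-/

open Complex Finset

namespace Kronecker

section Primes

variable {ι : Type*} {p : ι → ℕ}

lemma factorization_prod_pow_of_prime (hp : ∀ i, (p i).Prime) (hinj : Function.Injective p)
    (s : Finset ι) (a : ι → ℕ) {j : ι} (hj : j ∈ s) :
    (∏ i ∈ s, p i ^ a i).factorization (p j) = a j := by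
  rw [Nat.factorization_prod fun i _ => pow_ne_zero _ (hp i).ne_zero, Finset.sum_apply']
  simp_rw [Nat.Prime.factorization_pow (hp _), Finsupp.single_apply]
  rw [Finset.sum_eq_single_of_mem j hj fun i _ hij => if_neg (hinj.ne hij), if_pos rfl]

lemma linearIndependent_log_of_prime (hp : ∀ i, (p i).Prime) (hinj : Function.Injective p) :
    LinearIndependent ℤ (fun i => Real.log (p i)) := by
  rw [linearIndependent_iff']
  intro s g hg j hj
  have log_prod_pow (a : ι → ℕ) :
      Real.log (∏ i ∈ s, p i ^ a i : ℕ) = ∑ i ∈ s, a i * Real.log (p i) := by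
    push_cast
    rw [Real.log_prod fun i _ => pow_ne_zero _ (Nat.cast_ne_zero.2 (hp i).ne_zero)]
    simp_rw [Real.log_pow]
  have prod_pow_pos (a : ι → ℕ) : (0 : ℝ) < (∏ i ∈ s, p i ^ a i : ℕ) := by
    exact_mod_cast Finset.prod_pos fun i _ => pow_pos (hp i).pos _
  have key : ∏ i ∈ s, p i ^ (g i).toNat = ∏ i ∈ s, p i ^ (-g i).toNat := by
    refine Nat.cast_injective (R := ℝ) (Real.log_injOn_pos (prod_pow_pos _) (prod_pow_pos _) ?_)
    rw [log_prod_pow, log_prod_pow, ← sub_eq_zero, ← Finset.sum_sub_distrib, ← hg]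
    refine Finset.sum_congr rfl fun i _ => ?_
    rw [← sub_mul, zsmul_eq_mul]
    congr 1
    exact_mod_cast Int.toNat_sub_toNat_neg (g i)
  have := congrArg (·.factorization (p j)) key
  simp only [factorization_prod_pow_of_prime hp hinj s _ hj] at this
  omega

end Primes

lemma norm_exp_I_mul_mul (w T : ℝ) : ‖exp (I * w * T)‖ = 1 := by
  rw [norm_exp]; simp

lemma norm_integral_exp_I_mul_le {w : ℝ} (hw : w ≠ 0) (a b : ℝ) :
    ‖∫ T in a..b, exp (I * w * T)‖ ≤ 2 / |w| := by
  rw [integral_exp_mul_complex (mul_ne_zero I_ne_zero (ofReal_ne_zero.2 hw)), norm_div,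
    norm_mul, norm_I, one_mul, norm_real, Real.norm_eq_abs]
  gcongr
  calc _ ≤ ‖exp (I * w * b)‖ + ‖exp (I * w * a)‖ := norm_sub_le _ _
    _ = 2 := by rw [norm_exp_I_mul_mul, norm_exp_I_mul_mul]; norm_num

section MeanValue

variable {α : Type*} (s : Finset α) (b : α → ℂ) (w : α → ℝ)

lemma re_integral_sum_exp_ge (A X : ℝ) :
    X * (∑ j ∈ s with w j = 0, b j).re - ∑ j ∈ s with w j ≠ 0, 2 * ‖b j‖ / |w j| ≤
      (∫ T in A..A + X, ∑ j ∈ s, b j * exp (I * w j * T)).re := by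
  rw [intervalIntegral.integral_finsetSum fun j _ =>
    (by fun_prop : Continuous _).intervalIntegrable _ _]
  simp_rw [intervalIntegral.integral_const_mul]
  rw [← Finset.sum_filter_add_sum_filter_not s (fun j => w j = 0), add_re]
  have zero_freq : ∑ j ∈ s with w j = 0, b j * ∫ T in A..A + X, exp (I * w j * T) =
      X * ∑ j ∈ s with w j = 0, b j := by
    rw [Finset.mul_sum]
    refine Finset.sum_congr rfl fun j hj => ?_
    simp [(Finset.mem_filter.1 hj).2, mul_comm]
  have nonzero_freq : ‖∑ j ∈ s with w j ≠ 0, b j * ∫ T in A..A + X, exp (I * w j * T)‖ ≤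
      ∑ j ∈ s with w j ≠ 0, 2 * ‖b j‖ / |w j| := by
    refine (norm_sum_le _ _).trans (Finset.sum_le_sum fun j hj => ?_)
    rw [norm_mul, mul_comm 2, mul_div_assoc]
    exact mul_le_mul_of_nonneg_left
      (norm_integral_exp_I_mul_le (Finset.mem_filter.1 hj).2 _ _) (norm_nonneg (b j))
  rw [zero_freq, re_ofReal_mul]
  have := neg_le_of_abs_le ((abs_re_le_norm
    (∑ j ∈ s with w j ≠ 0, b j * ∫ T in A..A + X, exp (I * w j * T))).trans nonzero_freq)
  linarith

lemma exists_gt_re_sum_exp_gt (T₀ : ℝ) {η : ℝ} (hη : 0 < η) :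
    ∃ T, T₀ < T ∧
      (∑ j ∈ s with w j = 0, b j).re - η < (∑ j ∈ s, b j * exp (I * w j * T)).re := by
  set B := ∑ j ∈ s with w j ≠ 0, 2 * ‖b j‖ / |w j|
  have hB : 0 ≤ B := Finset.sum_nonneg fun j _ => by positivity
  set X := B / η + 1
  have hX : X * η = B + η := by rw [add_mul, div_mul_cancel₀ _ hη.ne', one_mul]
  -- A deficit of `η` on all of `[T₀, T₀ + X]` costs `X * η > B`, more than the nonzero
  -- frequencies can make up.
  by_contra! h
  have hint := intervalIntegral.integral_mono_on_of_le_Ioo (μ := MeasureTheory.volume)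
    (by linarith [div_nonneg hB hη.le] : T₀ ≤ T₀ + X)
    ((by fun_prop : Continuous _).intervalIntegrable _ _) intervalIntegrable_const
    fun T hT => h T hT.1
  have hre := intervalIntegral.intervalIntegral_re (𝕜 := ℂ) (μ := MeasureTheory.volume)
    ((by fun_prop : Continuous fun T : ℝ => ∑ j ∈ s, b j * exp (I * w j * T)).intervalIntegrable
      T₀ (T₀ + X))
  simp only [RCLike.re_to_complex] at hre
  rw [intervalIntegral.integral_const, smul_eq_mul, add_sub_cancel_left, hre] at hint
  have := re_integral_sum_exp_ge s b w T₀ X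
  linarith

end MeanValue

lemma mul_conj_exp_I_mul_mul (z z' : ℂ) (w w' T : ℝ) :
    z * exp (I * w * T) * (starRingEnd ℂ) (z' * exp (I * w' * T)) =
      z * (starRingEnd ℂ) z' * exp (I * ↑(w - w') * T) := by
  rw [map_mul, ← exp_conj, mul_mul_mul_comm, ← exp_add]
  congr 2
  simp only [map_mul, conj_I, conj_ofReal]
  push_cast
  ring

lemma exists_gt_sum_norm_sq_sub_lt_norm_sum_exp_sq {α : Type*} {s : Finset α} (C : α → ℂ)
    {ω : α → ℝ} (hω : Set.InjOn ω s) (T₀ : ℝ) {η : ℝ} (hη : 0 < η) :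
    ∃ T, T₀ < T ∧ ∑ k ∈ s, ‖C k‖ ^ 2 - η < ‖∑ k ∈ s, C k * exp (I * ω k * T)‖ ^ 2 := by
  obtain ⟨T, hT, hlt⟩ := exists_gt_re_sum_exp_gt (s ×ˢ s)
    (fun kk => C kk.1 * (starRingEnd ℂ) (C kk.2)) (fun kk => ω kk.1 - ω kk.2) T₀ hη
  refine ⟨T, hT, ?_⟩
  have diagonal : ∑ kk ∈ s ×ˢ s with ω kk.1 - ω kk.2 = 0, C kk.1 * (starRingEnd ℂ) (C kk.2) =
      ((∑ k ∈ s, ‖C k‖ ^ 2 : ℝ) : ℂ) := by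
    rw [Finset.sum_filter, Finset.sum_product]
    push_cast
    refine Finset.sum_congr rfl fun k hk => ?_
    rw [Finset.sum_eq_single_of_mem k hk fun k' hk' hne => if_neg fun h =>
      hne (hω hk' hk (sub_eq_zero.1 h).symm), if_pos (sub_self _), mul_conj, normSq_eq_norm_sq]
    push_cast; rfl
  have expand : ((‖∑ k ∈ s, C k * exp (I * ω k * T)‖ ^ 2 : ℝ) : ℂ) =
      ∑ kk ∈ s ×ˢ s, C kk.1 * (starRingEnd ℂ) (C kk.2) * exp (I * ↑(ω kk.1 - ω kk.2) * T) := by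
    rw [← normSq_eq_norm_sq, ← mul_conj, map_sum, Finset.sum_mul_sum, Finset.sum_product]
    simp only [mul_conj_exp_I_mul_mul]
  rw [diagonal, ofReal_re, ← expand, ofReal_re] at hlt
  exact hlt

lemma exists_pow_lt_div_succ_pow {K δ : ℝ} (hδ : 0 < δ) (hδK : δ < K) (n : ℕ) :
    ∃ m : ℕ, (K - δ) ^ (2 * m) < K ^ (2 * m) / (m + 1) ^ n := by
  have hK : 0 < K := hδ.trans hδK
  set r := ((K - δ) / K) ^ 2
  have hr0 : 0 < r := by
    have : 0 < K - δ := by linarith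
    positivity
  have hr1 : r < 1 := by
    rw [sq_lt_one_iff₀ (div_nonneg (by linarith) hK.le), div_lt_one hK]; linarith
  obtain ⟨m, hm⟩ := (((tendsto_pow_const_mul_const_pow_of_lt_one n hr0.le hr1).comp
    (Filter.tendsto_add_atTop_nat 1)).eventually (gt_mem_nhds hr0)).exists
  have hm' : ((m : ℝ) + 1) ^ n * r ^ m < 1 := by
    simp only [Function.comp_apply, Nat.cast_succ, pow_succ] at hm
    nlinarith
  have hpow : (K - δ) ^ (2 * m) = K ^ (2 * m) * r ^ m := by
    rw [pow_mul, pow_mul, ← mul_pow]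
    simp only [r, div_pow]
    field_simp
  refine ⟨m, ?_⟩
  rw [lt_div_iff₀ (by positivity), hpow]
  nlinarith [pow_pos hK (2 * m)]

section Moments

variable {κ : Type*} [Fintype κ] [DecidableEq κ]

lemma sum_exp_pow (c : κ → ℂ) (μ : κ → ℝ) (m : ℕ) (T : ℝ) :
    (∑ j, c j * exp (I * μ j * T)) ^ m = ∑ k ∈ piAntidiag univ m,
      (Nat.multinomial univ k * ∏ j, c j ^ k j) * exp (I * ↑(∑ j, k j * μ j) * T) := by
  rw [Finset.sum_pow_eq_sum_piAntidiag]
  refine Finset.sum_congr rfl fun k _ => ?_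
  simp_rw [mul_pow, Finset.prod_mul_distrib, ← exp_nat_mul, ← exp_sum, mul_assoc]
  congr 3
  push_cast
  rw [Finset.sum_mul, Finset.mul_sum]
  exact Finset.sum_congr rfl fun j _ => by ring

lemma card_piAntidiag_univ_le (m : ℕ) :
    #(piAntidiag (univ : Finset κ) m) ≤ (m + 1) ^ Fintype.card κ := by
  calc #(piAntidiag (univ : Finset κ) m)
      ≤ #(Fintype.piFinset fun _ : κ => range (m + 1)) := by
        refine Finset.card_le_card fun k hk => Fintype.mem_piFinset.2 fun j => ?_
        rw [mem_range, Nat.lt_succ_iff, ← (mem_piAntidiag.1 hk).1]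
        exact Finset.single_le_sum (fun _ _ => Nat.zero_le _) (mem_univ j)
    _ = (m + 1) ^ Fintype.card κ := by simp

lemma sum_multinomial_piAntidiag_univ (m : ℕ) :
    ∑ k ∈ piAntidiag (univ : Finset κ) m, Nat.multinomial univ k = Fintype.card κ ^ m := by
  simpa using (Finset.sum_pow_eq_sum_piAntidiag (univ : Finset κ) (fun _ => (1 : ℕ)) m).symm

lemma card_pow_le_mul_sum_multinomial_sq (m : ℕ) :
    (Fintype.card κ : ℝ) ^ (2 * m) ≤ (m + 1) ^ Fintype.card κ *
      ∑ k ∈ piAntidiag (univ : Finset κ) m, (Nat.multinomial univ k : ℝ) ^ 2 := by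
  calc (Fintype.card κ : ℝ) ^ (2 * m)
      = (∑ k ∈ piAntidiag (univ : Finset κ) m, (Nat.multinomial univ k : ℝ)) ^ 2 := by
        rw [← Nat.cast_sum, sum_multinomial_piAntidiag_univ]; push_cast; ring
    _ ≤ #(piAntidiag (univ : Finset κ) m) *
          ∑ k ∈ piAntidiag (univ : Finset κ) m, (Nat.multinomial univ k : ℝ) ^ 2 :=
        sq_sum_le_card_mul_sum_sq
    _ ≤ _ := by
        gcongr
        exact_mod_cast card_piAntidiag_univ_le m

lemma exists_gt_card_sub_le_norm_sum_exp (c : κ → ℂ) (hc : ∀ j, ‖c j‖ = 1) {μ : κ → ℝ}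
    (hμ : ∀ m : ℕ, Set.InjOn (fun k : κ → ℕ => ∑ j, (k j : ℝ) * μ j)
      ((piAntidiag univ m : Finset (κ → ℕ)) : Set (κ → ℕ)))
    (T₀ : ℝ) {δ : ℝ} (hδ : 0 < δ) :
    ∃ T, T₀ < T ∧ Fintype.card κ - δ ≤ ‖∑ j, c j * exp (I * μ j * T)‖ := by
  rcases le_or_gt (Fintype.card κ : ℝ) δ with hKδ | hδK
  · exact ⟨T₀ + 1, by linarith, le_trans (by linarith) (norm_nonneg _)⟩
  obtain ⟨m, hm⟩ := exists_pow_lt_div_succ_pow hδ hδK (Fintype.card κ)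
  obtain ⟨T, hT, hTm⟩ := exists_gt_sum_norm_sq_sub_lt_norm_sum_exp_sq
    (fun k => Nat.multinomial univ k * ∏ j, c j ^ k j) (hμ m) T₀ (sub_pos.2 hm)
  refine ⟨T, hT, (lt_of_pow_lt_pow_left₀ (2 * m) (norm_nonneg _) ?_).le⟩
  have hmoment := card_pow_le_mul_sum_multinomial_sq (κ := κ) m
  rw [← div_le_iff₀' (by positivity)] at hmoment
  simp only [norm_mul, norm_prod, norm_pow, hc, one_pow, prod_const_one, mul_one,
    Complex.norm_natCast] at hTm
  rw [pow_mul' ‖∑ j, c j * exp (I * μ j * T)‖, ← norm_pow, sum_exp_pow]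
  linarith

end Moments

lemma norm_sub_sq_le_of_card_sub_le_norm_sum {E : Type*} [NormedAddCommGroup E]
    [InnerProductSpace ℝ E] {κ : Type*} [Fintype κ] {z : κ → E} (hz : ∀ j, ‖z j‖ ≤ 1) {δ : ℝ}
    (h : Fintype.card κ - δ ≤ ‖∑ j, z j‖) (i j : κ) : ‖z i - z j‖ ^ 2 ≤ 4 * δ := by
  classical
  have hsum_le (s : Finset κ) : ‖∑ k ∈ s, z k‖ ≤ #s := by
    simpa using (norm_sum_le s z).trans (Finset.sum_le_card_nsmul s _ 1 fun k _ => hz k)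
  obtain rfl | hij := eq_or_ne i j
  · have := hsum_le univ
    rw [card_univ] at this
    rw [sub_self, norm_zero]
    nlinarith
  set rest := (univ.erase i).erase j
  have hj : j ∈ univ.erase i := mem_erase.2 ⟨hij.symm, mem_univ j⟩
  have hsplit : ∑ k, z k = (z i + z j) + ∑ k ∈ rest, z k := by
    rw [← add_sum_erase _ _ (mem_univ i), ← add_sum_erase _ _ hj, add_assoc]
  have hcard : (#rest : ℝ) + 2 = Fintype.card κ := by
    rw [← card_univ, ← card_erase_add_one (mem_univ i), ← card_erase_add_one hj]
    push_cast; ring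
  have hpair : 2 - δ ≤ ‖z i + z j‖ := by
    have := norm_add_le (z i + z j) (∑ k ∈ rest, z k)
    rw [← hsplit] at this
    linarith [hsum_le rest]
  have hsq : ‖z i - z j‖ ^ 2 ≤ 4 - ‖z i + z j‖ ^ 2 := by
    have := parallelogram_law_with_norm ℝ (z i) (z j)
    have := pow_le_one₀ (norm_nonneg _) (hz i) (n := 2)
    have := pow_le_one₀ (norm_nonneg _) (hz j) (n := 2)
    nlinarith
  rcases le_or_gt δ 2 with hδ | hδ
  · nlinarith [pow_le_pow_left₀ (by linarith) hpair 2]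
  · nlinarith [sq_nonneg ‖z i + z j‖]

lemma injOn_piAntidiag_option {ι : Type*} [Fintype ι] [DecidableEq ι] {ω : ι → ℝ}
    (hω : LinearIndependent ℤ ω) (m : ℕ) :
    Set.InjOn (fun k : Option ι → ℕ => ∑ j, (k j : ℝ) * j.elim 0 ω)
      ((piAntidiag univ m : Finset (Option ι → ℕ)) : Set (Option ι → ℕ)) := by
  intro k hk k' hk' hkk'
  simp only [Fintype.sum_option, Option.elim_none, mul_zero, zero_add, Option.elim_some] at hkk'
  have hsome : ∀ i, k (some i) = k' (some i) := by
    have := Fintype.linearIndependent_iff.1 hω (fun i => (k (some i) : ℤ) - k' (some i))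
      (by simp only [sub_smul, sum_sub_distrib, zsmul_eq_mul]; push_cast; rw [hkk', sub_self])
    exact fun i => by exact_mod_cast sub_eq_zero.1 (this i)
  have htotal := (mem_piAntidiag.1 hk).1.trans (mem_piAntidiag.1 hk').1.symm
  simp only [Fintype.sum_option, hsome] at htotal
  funext j
  cases j with
  | none => omega
  | some i => exact hsome i

theorem exists_gt_forall_norm_exp_sub_le {ι : Type*} [Fintype ι] [DecidableEq ι] {ω : ι → ℝ}
    (hω : LinearIndependent ℤ ω) {θ : ι → ℂ} (hθ : ∀ i, ‖θ i‖ = 1) {ε : ℝ} (hε : 0 < ε)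
    (T₀ : ℝ) : ∃ T, T₀ < T ∧ ∀ i, ‖exp (I * T * ω i) - θ i‖ ≤ ε := by
  -- The extra coordinate `none` is the constant term `1` that the other terms are compared with.
  set c : Option ι → ℂ := fun j => j.elim 1 fun i => (starRingEnd ℂ) (θ i)
  have hc : ∀ j, ‖c j‖ = 1 := fun j => by cases j <;> simp [c, hθ]
  obtain ⟨T, hT, hTsum⟩ := exists_gt_card_sub_le_norm_sum_exp c hc
    (injOn_piAntidiag_option hω) T₀ (by positivity : 0 < ε ^ 2 / 4)
  refine ⟨T, hT, fun i => ?_⟩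
  have hclose := norm_sub_sq_le_of_card_sub_le_norm_sum
    (fun j => by rw [norm_mul, hc, norm_exp_I_mul_mul, one_mul]) hTsum (some i) none
  have hrot : exp (I * T * ω i) - θ i =
      θ i * ((starRingEnd ℂ) (θ i) * exp (I * ω i * T) - 1) := by
    have : θ i * (starRingEnd ℂ) (θ i) = 1 := by
      rw [mul_conj, normSq_eq_norm_sq, hθ]; simp
    rw [mul_right_comm I]
    linear_combination -exp (I * ω i * T) * this
  simp only [c, Option.elim_some, Option.elim_none, ofReal_zero, mul_zero, zero_mul, exp_zero,
    mul_one] at hclose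
  rw [hrot, norm_mul, hθ, one_mul]
  exact (pow_le_pow_iff_left₀ (norm_nonneg _) hε.le two_ne_zero).1 (by linarith)

end Kronecker

theorem simultaneous_approx_primes_general (D : ℕ) (ε T₀ : ℝ) (hε : 0 < ε)
    (f : ℕ → ℂ) (hf : ∀ p : ℕ, p.Prime → p ≤ D → ‖f p‖ = 1) :
    ∃ T : ℝ, T₀ < T ∧ ∀ p : ℕ, p.Prime → p ≤ D →
      ‖Complex.exp (Complex.I * T * Real.log p) - f p‖ ≤ ε := by
  set P := {p ∈ range (D + 1) | p.Prime}
  have hP {p : ℕ} : p ∈ P ↔ p.Prime ∧ p ≤ D := by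
    rw [mem_filter, mem_range, Nat.lt_succ_iff, and_comm]
  obtain ⟨T, hT, hTP⟩ := Kronecker.exists_gt_forall_norm_exp_sub_le
    (Kronecker.linearIndependent_log_of_prime (fun p : P => (hP.1 p.2).1) Subtype.val_injective)
    (θ := fun p : P => f p) (fun p => hf p (hP.1 p.2).1 (hP.1 p.2).2) hε T₀
  exact ⟨T, hT, fun p hp hpD => hTP ⟨p, hP.2 ⟨hp, hpD⟩⟩⟩

/-- For every `D`, `ε > 0`, `T₀ > 0` and every function `f` from the primes `≤ D` to the
unit circle in `ℂ`, there is `T > T₀` with `|p^{iT} - f p| ≤ ε` for all primes `p ≤ D`,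
where `p^{iT} = exp(i T log p)`. -/
theorem simultaneous_approx_primes (D : ℕ) (ε T₀ : ℝ) (hε : 0 < ε) (hT₀ : 0 < T₀)
    (f : ℕ → ℂ) (hf : ∀ p : ℕ, p.Prime → p ≤ D → ‖f p‖ = 1) :
    ∃ T : ℝ, T₀ < T ∧ ∀ p : ℕ, p.Prime → p ≤ D →
      ‖Complex.exp (Complex.I * T * Real.log p) - f p‖ ≤ ε :=
  simultaneous_approx_primes_general D ε T₀ hε f hf
end

section
/- For every natural number D, every ε > 0, and every T₀ > 0, there exists T > T₀ such that |p^{iT} − 1| ≤ ε for all primes p ≤ D. -/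
/-!
The map `t ↦ (p^{it})_{p ≤ D}` is a continuous homomorphism from `ℝ` to the compact torus
`Circle ^ (D + 1)`. In a sequentially compact group the powers of any element `g` return to every
neighbourhood of `1`: a convergent subsequence `g ^ φ j` yields `g ^ (φ (j+1) - φ j) → 1`.
Applying this to the image of `t₀ > T₀` gives `T = n t₀`.
-/

open Filter Topology

theorem exists_pow_mem_nhds_one {G : Type*} [Group G] [TopologicalSpace G] [IsTopologicalGroup G]
    [SeqCompactSpace G] (g : G) {U : Set G} (hU : U ∈ 𝓝 1) :
    ∃ n : ℕ, 0 < n ∧ g ^ n ∈ U := by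
  obtain ⟨a, φ, hφ, hlim⟩ := SeqCompactSpace.tendsto_subseq fun n => g ^ n
  have hgaps : Tendsto (fun j => g ^ φ (j + 1) * (g ^ φ j)⁻¹) atTop (𝓝 1) := by
    simpa using ((hlim.comp (tendsto_add_atTop_nat 1)).mul hlim.inv)
  obtain ⟨j, hj⟩ := (hgaps.eventually hU).exists
  refine ⟨φ (j + 1) - φ j, Nat.sub_pos_of_lt (hφ j.lt_succ_self), ?_⟩
  rwa [pow_sub g (hφ j.lt_succ_self).le]

theorem exists_gt_forall_norm_exp_mul_I_sub_one_lt {ι : Type*} [Fintype ι] (x : ι → ℝ)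
    {ε : ℝ} (hε : 0 < ε) (T₀ : ℝ) :
    ∃ T : ℝ, T₀ < T ∧ ∀ i, ‖Complex.exp (Complex.I * T * x i) - 1‖ < ε := by
  set t₀ := |T₀| + 1
  obtain ⟨n, hn, hball⟩ := exists_pow_mem_nhds_one (fun i => Circle.exp (t₀ * x i))
    (Metric.ball_mem_nhds 1 hε)
  refine ⟨n * t₀, ?_, fun i => ?_⟩
  · have : (1 : ℝ) ≤ n := by exact_mod_cast hn
    nlinarith [le_abs_self T₀, abs_nonneg T₀]
  · have hi := (dist_pi_lt_iff hε).1 hball i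
    rw [Pi.pow_apply, ← Circle.exp_natCast_mul, Pi.one_apply] at hi
    change dist (Circle.exp _ : ℂ) 1 < ε at hi
    rw [Circle.coe_exp, dist_eq_norm] at hi
    rwa [show Complex.I * ↑(n * t₀) * ↑(x i) = ↑(n * (t₀ * x i)) * Complex.I by
      push_cast; ring]

theorem simultaneous_approx_primes_one_general (D : ℕ) (ε T₀ : ℝ) (hε : 0 < ε) :
    ∃ T : ℝ, T₀ < T ∧ ∀ p : ℕ, p.Prime → p ≤ D →
      ‖Complex.exp (Complex.I * T * Real.log p) - 1‖ ≤ ε := by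
  obtain ⟨T, hT, happrox⟩ := exists_gt_forall_norm_exp_mul_I_sub_one_lt
    (fun i : Fin (D + 1) => Real.log i) hε T₀
  exact ⟨T, hT, fun p _ hpD => (happrox ⟨p, Nat.lt_succ_of_le hpD⟩).le⟩

/-- For every `D`, `ε > 0`, `T₀ > 0` there is `T > T₀` such that `|p^{iT} - 1| ≤ ε`
for all primes `p ≤ D`, where `p^{iT} = exp(i T log p)`. -/
theorem simultaneous_approx_primes_one (D : ℕ) (ε T₀ : ℝ) (hε : 0 < ε) (hT₀ : 0 < T₀) :
    ∃ T : ℝ, T₀ < T ∧ ∀ p : ℕ, p.Prime → p ≤ D →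
      ‖Complex.exp (Complex.I * T * Real.log p) - 1‖ ≤ ε :=
  simultaneous_approx_primes_one_general D ε T₀ hε
end

section
/- For every natural number D, every ε > 0, and every T₀ > 0, there exists T > T₀ such that for all primes p ≤ D with p ≡ 1 (mod 3) one has |p^{iT} − 1| ≤ ε, and for all primes p ≤ D with p ≡ 2 (mod 3) one has |p^{iT} + 1| ≤ ε. -/
/-!
Bohr's proof of Kronecker's theorem, applied to the frequencies `log p` (`p ≤ D` prime) and the
phases `θ_p = 0` for `p ≡ 1`, `θ_p = π` otherwise. Put `z_p(t) = e^{i(t log p - θ_p)}`. If every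
`t > T₀` had some `p` with `‖z_p(t) - 1‖ ≥ ε`, then `F(t) = ∏_p (1 + z_p(t))` would satisfy
`‖F(t)‖ ≤ 2^k ρ` with `ρ < 1` on `(T₀, ∞)`. Now `F^{2M}` is a trigonometric polynomial whose
frequencies `∑ m_p log p` are pairwise distinct by unique factorisation, and its mean value against
`e^{-iωt}` isolates one coefficient, so every coefficient has norm at most `(2^k ρ)^{2M}`. But the
coefficient of `m = (M, …, M)` has norm `C(2M, M)^k ≥ (4^M / 2M)^k`, which is larger once `M` is
large.
-/

open Finset Complex Filter Function

theorem Nat.factorization_prod_pow_apply {ι : Type*} [Fintype ι] {p : ι → ℕ}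
    (hp : ∀ i, (p i).Prime) (hinj : Injective p) (m : ι → ℕ) (j : ι) :
    (∏ i, p i ^ m i).factorization (p j) = m j := by
  rw [Nat.factorization_prod fun i _ => pow_ne_zero _ (hp i).ne_zero, Finset.sum_apply',
    Finset.sum_eq_single j]
  · simp [(hp j).factorization_pow]
  · intro i _ hij
    simp [(hp i).factorization_pow, Finsupp.single_eq_of_ne (hinj.ne hij).symm]
  · simp

theorem injective_sum_mul_log_prime {ι : Type*} [Fintype ι] {p : ι → ℕ}
    (hp : ∀ i, (p i).Prime) (hinj : Injective p) :
    Injective fun m : ι → ℕ => ∑ i, (m i : ℝ) * Real.log (p i) := by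
  have hexp (m : ι → ℕ) :
      Real.exp (∑ i, (m i : ℝ) * Real.log (p i)) = ((∏ i, p i ^ m i : ℕ) : ℝ) := by
    push_cast
    simp only [Real.exp_sum, Real.exp_nat_mul,
      Real.exp_log (Nat.cast_pos.2 (hp _).pos)]
  intro m m' h
  have hprod : ∏ i, p i ^ m i = ∏ i, p i ^ m' i := by
    exact_mod_cast (hexp m).symm.trans ((congrArg Real.exp h).trans (hexp m'))
  funext j
  rw [← Nat.factorization_prod_pow_apply hp hinj m j, hprod,
    Nat.factorization_prod_pow_apply hp hinj m' j]

theorem prod_one_add_pow {R ι : Type*} [CommSemiring R] [Fintype ι] [DecidableEq ι]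
    (w : ι → R) (n : ℕ) :
    (∏ i, (1 + w i)) ^ n =
      ∑ m ∈ Fintype.piFinset fun _ => range (n + 1), ∏ i, (n.choose (m i) * w i ^ m i) := by
  calc (∏ i, (1 + w i)) ^ n = ∏ i, ∑ j ∈ range (n + 1), n.choose j * w i ^ j := by
        rw [← prod_pow]
        refine prod_congr rfl fun i _ => ?_
        rw [add_comm, add_pow]
        exact sum_congr rfl fun j _ => by rw [one_pow, mul_one, mul_comm]
    _ = _ := prod_univ_sum _ _

theorem prod_choose_mul_exp_pow {ι : Type*} [Fintype ι] (n : ℕ) (m : ι → ℕ) (ℓ θ : ι → ℝ)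
    (t : ℝ) :
    ∏ i, ((n.choose (m i) : ℂ) * exp ((t * ℓ i - θ i : ℝ) * I) ^ m i) =
      (∏ i, (n.choose (m i) : ℂ)) * exp ((-∑ i, m i * θ i : ℝ) * I) *
        exp ((t * ∑ i, m i * ℓ i : ℝ) * I) := by
  rw [prod_mul_distrib, mul_assoc, ← exp_add]
  simp only [← exp_nat_mul, ← exp_sum]
  congr 2
  push_cast
  rw [mul_sum, ← sum_neg_distrib, sum_mul, sum_mul, ← sum_add_distrib]
  exact sum_congr rfl fun i _ => by ring

theorem Finset.prod_le_pow_card_mul {ι : Type*} {s : Finset ι} {a : ι → ℝ} {C ρ : ℝ}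
    (ha : ∀ i ∈ s, 0 ≤ a i ∧ a i ≤ C) {i₀ : ι} (hi₀ : i₀ ∈ s) (hai₀ : a i₀ ≤ C * ρ) :
    ∏ i ∈ s, a i ≤ C ^ #s * ρ := by
  classical
  have hrest : ∏ i ∈ s.erase i₀, a i ≤ C ^ #(s.erase i₀) :=
    (prod_le_prod (fun i hi => (ha i (mem_of_mem_erase hi)).1)
      fun i hi => (ha i (mem_of_mem_erase hi)).2).trans_eq (prod_const C)
  calc ∏ i ∈ s, a i = a i₀ * ∏ i ∈ s.erase i₀, a i := (mul_prod_erase s a hi₀).symm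
    _ ≤ C * ρ * C ^ #(s.erase i₀) :=
        mul_le_mul hai₀ hrest (prod_nonneg fun i hi => (ha i (mem_of_mem_erase hi)).1)
          ((ha i₀ hi₀).1.trans hai₀)
    _ = C ^ #s * ρ := by rw [← card_erase_add_one hi₀, pow_succ]; ring

theorem norm_one_add_le_sqrt {z : ℂ} (hz : ‖z‖ = 1) {ε : ℝ} (hε : 0 ≤ ε) (h : ε ≤ ‖z - 1‖) :
    ‖1 + z‖ ≤ √(4 - ε ^ 2) := by
  have hpar := parallelogram_law_with_norm ℝ (1 : ℂ) z
  rw [norm_one, hz, norm_sub_rev] at hpar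
  rw [Real.le_sqrt (norm_nonneg _) (by nlinarith [norm_nonneg (1 - z)])]
  nlinarith

theorem exists_pow_lt_centralBinom_pow (k : ℕ) {ρ : ℝ} (hρ₀ : 0 ≤ ρ) (hρ₁ : ρ < 1) :
    ∃ M : ℕ, (2 ^ k * ρ) ^ (2 * M) < (M.centralBinom : ℝ) ^ k := by
  have hlim : Tendsto (fun M : ℕ => (M : ℝ) ^ k * (ρ ^ 2) ^ M) atTop (nhds 0) :=
    tendsto_pow_const_mul_const_pow_of_lt_one k (by positivity) (by nlinarith)
  obtain ⟨M, hM, hM₀⟩ :=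
    ((hlim.eventually (gt_mem_nhds (by positivity : (0 : ℝ) < 1 / 2 ^ k))).and
      (eventually_gt_atTop 0)).exists
  refine ⟨M, ?_⟩
  have hC : (0 : ℝ) < (M.centralBinom : ℝ) ^ k := by
    have := M.centralBinom_pos; positivity
  have h4 : (4 : ℝ) ^ M ≤ 2 * M * M.centralBinom := by
    exact_mod_cast Nat.four_pow_le_two_mul_self_mul_centralBinom M hM₀
  have hsmall : 2 ^ k * ((M : ℝ) ^ k * (ρ ^ 2) ^ M) < 1 := by
    rwa [lt_div_iff₀' (by positivity)] at hM
  calc (2 ^ k * ρ) ^ (2 * M) = ((4 : ℝ) ^ M) ^ k * (ρ ^ 2) ^ M := by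
        rw [mul_pow, ← pow_mul, ← pow_mul, ← pow_mul, show (4 : ℝ) = 2 ^ 2 by norm_num,
          ← pow_mul]
        ring_nf
    _ ≤ (2 * M * M.centralBinom) ^ k * (ρ ^ 2) ^ M := by gcongr
    _ = 2 ^ k * ((M : ℝ) ^ k * (ρ ^ 2) ^ M) * (M.centralBinom : ℝ) ^ k := by ring
    _ < (M.centralBinom : ℝ) ^ k := mul_lt_of_lt_one_left hC hsmall

theorem le_of_eventually_mul_le_mul_add {a b K : ℝ} (h : ∀ᶠ T in atTop, a * T ≤ b * T + K) :
    a ≤ b := by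
  by_contra! hba
  have hgrow : Tendsto (fun T => (a - b) * T) atTop atTop :=
    tendsto_id.const_mul_atTop (sub_pos.2 hba)
  obtain ⟨T, hT, hKT⟩ := (h.and (hgrow.eventually_gt_atTop K)).exists
  linarith

theorem norm_integral_exp_mul_I_le {ω : ℝ} (hω : ω ≠ 0) (T : ℝ) :
    ‖∫ t in (0 : ℝ)..T, exp ((t * ω : ℝ) * I)‖ ≤ 2 / |ω| := by
  have hc : (ω : ℂ) * I ≠ 0 := mul_ne_zero (ofReal_ne_zero.2 hω) I_ne_zero
  have hnorm (x : ℝ) : ‖exp ((ω : ℂ) * I * x)‖ = 1 := by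
    rw [show (ω : ℂ) * I * x = (x * ω : ℝ) * I by push_cast; ring, norm_exp_ofReal_mul_I]
  simp_rw [show ∀ t : ℝ, ((t * ω : ℝ) : ℂ) * I = (ω : ℂ) * I * t from
    fun t => by push_cast; ring]
  rw [integral_exp_mul_complex hc, norm_div, norm_mul, norm_I, mul_one,
    norm_real, Real.norm_eq_abs]
  gcongr
  calc _ ≤ ‖exp ((ω : ℂ) * I * T)‖ + ‖exp ((ω : ℂ) * I * (0 : ℝ))‖ := norm_sub_le _ _
    _ = 2 := by rw [hnorm, hnorm]; norm_num

theorem exists_norm_integral_sum_exp_sub_le {κ : Type*} {P : Finset κ} (c : κ → ℂ) {ω : κ → ℝ}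
    {k₀ : κ} (hk₀ : k₀ ∈ P) (hω₀ : ω k₀ = 0) (hω : ∀ k ∈ P, k ≠ k₀ → ω k ≠ 0) :
    ∃ B, ∀ T, ‖(∫ t in (0 : ℝ)..T, ∑ k ∈ P, c k * exp ((t * ω k : ℝ) * I)) - T * c k₀‖ ≤ B := by
  classical
  refine ⟨∑ k ∈ P.erase k₀, ‖c k‖ * (2 / |ω k|), fun T => ?_⟩
  have hk₀_term : ∫ t in (0 : ℝ)..T, c k₀ * exp ((t * ω k₀ : ℝ) * I) = T * c k₀ := by
    simp [hω₀]
  rw [intervalIntegral.integral_finsetSum fun k _ =>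
      (Continuous.intervalIntegrable (by fun_prop) _ _),
    ← add_sum_erase P _ hk₀, hk₀_term, add_sub_cancel_left]
  simp only [intervalIntegral.integral_const_mul]
  refine (norm_sum_le _ _).trans (sum_le_sum fun k hk => ?_)
  rw [norm_mul]
  gcongr
  exact norm_integral_exp_mul_I_le (hω k (mem_of_mem_erase hk) (ne_of_mem_erase hk)) T

theorem exists_norm_integral_le_mul_add {E : Type*} [NormedAddCommGroup E] [NormedSpace ℝ E]
    {g : ℝ → E} (hg : Continuous g) {R : ℝ} (h : ∀ᶠ t in atTop, ‖g t‖ ≤ R) :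
    ∃ K, ∀ᶠ T in atTop, ‖∫ t in (0 : ℝ)..T, g t‖ ≤ R * T + K := by
  obtain ⟨T₁, hT₁⟩ := eventually_atTop.1 h
  refine ⟨‖∫ t in (0 : ℝ)..T₁, g t‖ - R * T₁, ?_⟩
  filter_upwards [eventually_ge_atTop T₁] with T hT
  have htail : ‖∫ t in T₁..T, g t‖ ≤ R * |T - T₁| :=
    intervalIntegral.norm_integral_le_of_norm_le_const fun t ht =>
      hT₁ t (by rw [Set.uIoc_of_le hT] at ht; exact ht.1.le)
  rw [abs_of_nonneg (sub_nonneg.2 hT)] at htail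
  rw [← intervalIntegral.integral_add_adjacent_intervals (hg.intervalIntegrable 0 T₁)
    (hg.intervalIntegrable T₁ T)]
  linarith [norm_add_le (∫ t in (0 : ℝ)..T₁, g t) (∫ t in T₁..T, g t)]

theorem norm_le_of_eventually_norm_sum_exp_le {κ : Type*} {P : Finset κ} {c : κ → ℂ}
    {ω : κ → ℝ} (hω : Set.InjOn ω P) {R : ℝ}
    (hR : ∀ᶠ t in atTop, ‖∑ k ∈ P, c k * exp ((t * ω k : ℝ) * I)‖ ≤ R) {k₀ : κ} (hk₀ : k₀ ∈ P) :
    ‖c k₀‖ ≤ R := by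
  set g : ℝ → ℂ := fun t => ∑ k ∈ P, c k * exp ((t * (ω k - ω k₀) : ℝ) * I)
  have hg (t : ℝ) : ‖g t‖ = ‖∑ k ∈ P, c k * exp ((t * ω k : ℝ) * I)‖ := by
    have : g t = (∑ k ∈ P, c k * exp ((t * ω k : ℝ) * I)) * exp ((-(t * ω k₀) : ℝ) * I) := by
      simp only [g, sum_mul, mul_assoc, ← exp_add]
      congr! 3
      push_cast; ring
    rw [this, norm_mul, norm_exp_ofReal_mul_I, mul_one]
  obtain ⟨B, hB⟩ := exists_norm_integral_sum_exp_sub_le c hk₀ (sub_self _)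
    fun k hk hne => sub_ne_zero.2 (hω.ne hk hk₀ hne)
  obtain ⟨K, hK⟩ := exists_norm_integral_le_mul_add (g := g) (by fun_prop) (by simpa only [hg])
  refine le_of_eventually_mul_le_mul_add (K := K + B) ?_
  filter_upwards [hK, eventually_ge_atTop 0] with T hT hT₀
  calc ‖c k₀‖ * T = ‖(T : ℂ) * c k₀‖ := by
        rw [norm_mul, norm_real, Real.norm_of_nonneg hT₀, mul_comm]
    _ ≤ ‖∫ t in (0 : ℝ)..T, g t‖ + ‖(∫ t in (0 : ℝ)..T, g t) - T * c k₀‖ := norm_le_insert _ _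
    _ ≤ R * T + (K + B) := by linarith [hB T]

theorem exists_gt_forall_norm_exp_sub_one_lt {ι : Type*} [Fintype ι] {ℓ : ι → ℝ}
    (hℓ : Injective fun m : ι → ℕ => ∑ i, (m i : ℝ) * ℓ i) (θ : ι → ℝ) {ε : ℝ} (hε : 0 < ε)
    (T₀ : ℝ) : ∃ t, T₀ < t ∧ ∀ i, ‖exp ((t * ℓ i - θ i : ℝ) * I) - 1‖ < ε := by
  classical
  by_contra! hfar
  set z : ℝ → ι → ℂ := fun t i => exp ((t * ℓ i - θ i : ℝ) * I)
  set ρ := √(4 - ε ^ 2) / 2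
  have hρ₀ : 0 ≤ ρ := by positivity
  have hρ₁ : ρ < 1 := by
    have : √(4 - ε ^ 2) < 2 := (Real.sqrt_lt' two_pos).2 (by nlinarith)
    simp only [ρ]; linarith
  have hz (t : ℝ) (i : ι) : ‖z t i‖ = 1 := norm_exp_ofReal_mul_I _
  have hF (t : ℝ) (ht : T₀ < t) : ‖∏ i, (1 + z t i)‖ ≤ 2 ^ Fintype.card ι * ρ := by
    obtain ⟨i₀, hi₀⟩ := hfar t ht
    rw [norm_prod]
    refine prod_le_pow_card_mul (fun i _ => ⟨norm_nonneg _, ?_⟩) (mem_univ i₀) ?_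
    · exact (norm_add_le _ _).trans (by rw [norm_one, hz]; norm_num)
    · have := norm_one_add_le_sqrt (hz t i₀) hε.le hi₀
      simp only [ρ]; linarith
  obtain ⟨M, hM⟩ := exists_pow_lt_centralBinom_pow (Fintype.card ι) hρ₀ hρ₁
  set P := Fintype.piFinset fun _ : ι => range (2 * M + 1)
  set c : (ι → ℕ) → ℂ := fun m =>
    (∏ i, ((2 * M).choose (m i) : ℂ)) * exp ((-∑ i, m i * θ i : ℝ) * I)
  have hexpand (t : ℝ) :
      (∏ i, (1 + z t i)) ^ (2 * M) = ∑ m ∈ P, c m * exp ((t * ∑ i, m i * ℓ i : ℝ) * I) := by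
    rw [prod_one_add_pow]
    exact sum_congr rfl fun m _ => prod_choose_mul_exp_pow _ m ℓ θ t
  have hcentral : ‖c fun _ => M‖ ≤ (2 ^ Fintype.card ι * ρ) ^ (2 * M) := by
    have hmem : (fun _ => M) ∈ P := by
      simp only [P, Fintype.mem_piFinset, mem_range]
      omega
    refine norm_le_of_eventually_norm_sum_exp_le hℓ.injOn ?_ hmem
    filter_upwards [eventually_gt_atTop T₀] with t ht
    rw [← hexpand, norm_pow]
    exact pow_le_pow_left₀ (norm_nonneg _) (hF t ht) _
  have hc : ‖c fun _ => M‖ = (M.centralBinom : ℝ) ^ Fintype.card ι := by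
    simp only [c, norm_mul, norm_exp_ofReal_mul_I, mul_one, prod_const, card_univ, norm_pow,
      norm_natCast, Nat.centralBinom]
  linarith

theorem simultaneous_approx_primes_chi_general (D : ℕ) (ε T₀ : ℝ) (hε : 0 < ε) :
    ∃ T : ℝ, T₀ < T ∧
      (∀ p : ℕ, p.Prime → p ≤ D → p % 3 = 1 →
        ‖Complex.exp (Complex.I * T * Real.log p) - 1‖ ≤ ε) ∧
      (∀ p : ℕ, p.Prime → p ≤ D → p % 3 = 2 →
        ‖Complex.exp (Complex.I * T * Real.log p) + 1‖ ≤ ε) := by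
  set S := (range (D + 1)).filter Nat.Prime
  have hS {p : ℕ} (hp : p.Prime) (hpD : p ≤ D) : p ∈ S := by simp [S, hp, Nat.lt_succ_of_le hpD]
  obtain ⟨T, hT, happrox⟩ := exists_gt_forall_norm_exp_sub_one_lt
    (injective_sum_mul_log_prime (fun p : S => (mem_filter.1 p.2).2) Subtype.val_injective)
    (fun p => if p.1 % 3 = 1 then 0 else Real.pi) hε T₀
  refine ⟨T, hT, fun p hp hpD hp3 => ?_, fun p hp hpD hp3 => ?_⟩ <;>
    have h := happrox ⟨p, hS hp hpD⟩ <;>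
    rw [show I * T * Real.log p = ((T * Real.log p : ℝ) : ℂ) * I by push_cast; ring]
  · rw [if_pos hp3, sub_zero] at h
    exact h.le
  · rw [if_neg (show ¬p % 3 = 1 by omega), ofReal_sub, sub_mul, exp_sub, exp_pi_mul_I, div_neg,
      div_one, ← neg_add', norm_neg] at h
    exact h.le

/-- For every `D`, `ε > 0`, `T₀ > 0` there is `T > T₀` such that `|p^{iT} - 1| ≤ ε`
for all primes `p ≤ D` with `p ≡ 1 (mod 3)`, and `|p^{iT} + 1| ≤ ε` for all primes
`p ≤ D` with `p ≡ 2 (mod 3)`. Here `p^{iT} = exp(i T log p)`. -/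
theorem simultaneous_approx_primes_chi (D : ℕ) (ε T₀ : ℝ) (hε : 0 < ε) (hT₀ : 0 < T₀) :
    ∃ T : ℝ, T₀ < T ∧
      (∀ p : ℕ, p.Prime → p ≤ D → p % 3 = 1 →
        ‖Complex.exp (Complex.I * T * Real.log p) - 1‖ ≤ ε) ∧
      (∀ p : ℕ, p.Prime → p ≤ D → p % 3 = 2 →
        ‖Complex.exp (Complex.I * T * Real.log p) + 1‖ ≤ ε) :=
  simultaneous_approx_primes_chi_general D ε T₀ hε
end

section
/- Let T₁ > 2 be real, N ≥ 2, m a positive integer and 0 ≤ a₁ < m. Then the Lebesgue measure of the set {x ∈ [0,1] : (Nx)^{iT₁} ∈ e([a₁/m, (a₁+1)/m))} equals 1/m + O(1/T₁), with absolute implied constant. -/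
/-!
Put `r = exp (2π / (m T₁))`. Dilating `x ↦ r x` adds `1/m` to the phase `T₁ log (N x) / (2π)`,
so it cyclically permutes the `m` classes of `⌊m · phase⌋ mod m`, which partition `(0, 1]`.
Since `x ↦ r x` maps `(0, r⁻¹]` onto `(0, 1]`, consecutive classes have measures differing by
at most `r - 1`; all classes therefore lie within `m (r - 1) ≤ (2π / T₁) e^π` of their
mean `1/m`.
-/

open Real MeasureTheory Set

theorem ZMod.abs_sub_one_div_le_of_abs_succ_sub_le {m : ℕ} [NeZero m] {u : ZMod m → ℝ}
    (hsum : ∑ j, u j = 1) {δ : ℝ} (hδ : ∀ j, |u (j + 1) - u j| ≤ δ) (j : ZMod m) :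
    |u j - 1 / m| ≤ m * δ := by
  have hstep : ∀ (i : ZMod m) (k : ℕ), |u (i + k) - u i| ≤ k * δ := by
    intro i k
    induction k with
    | zero => simp
    | succ k ih =>
      calc |u (i + (k + 1 : ℕ)) - u i|
          ≤ |u (i + k + 1) - u (i + k)| + |u (i + k) - u i| := by
            rw [Nat.cast_succ, ← add_assoc]; exact abs_sub_le _ _ _
        _ ≤ δ + k * δ := add_le_add (hδ _) ih
        _ = (k + 1 : ℕ) * δ := by push_cast; ring
  have hfar : ∀ i, |u j - u i| ≤ m * δ := by
    intro i
    have h := hstep i (j - i).val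
    rw [ZMod.natCast_zmod_val, add_sub_cancel] at h
    exact h.trans (mul_le_mul_of_nonneg_right (mod_cast (j - i).val_lt.le)
      ((abs_nonneg _).trans (hδ 0)))
  have hm : (0 : ℝ) < m := mod_cast Nat.pos_of_neZero m
  have hmean : u j - 1 / m = (∑ i, (u j - u i)) / m := by
    rw [Finset.sum_sub_distrib, hsum, Finset.sum_const, Finset.card_univ, ZMod.card]
    field_simp
    ring
  rw [hmean, abs_div, abs_of_pos hm, div_le_iff₀ hm]
  calc |∑ i, (u j - u i)| ≤ ∑ i, |u j - u i| := Finset.abs_sum_le_sum_abs _ _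
    _ ≤ ∑ _i : ZMod m, m * δ := Finset.sum_le_sum fun i _ => hfar i
    _ = m * δ * m := by
      rw [Finset.sum_const, Finset.card_univ, ZMod.card, nsmul_eq_mul]; ring

theorem sum_measure_preimage_singleton_inter {α β : Type*} [MeasurableSpace α] [Fintype β]
    (μ : Measure α) {f : α → β} (hf : ∀ j, MeasurableSet (f ⁻¹' {j})) (s : Set α) :
    ∑ j, μ (f ⁻¹' {j} ∩ s) = μ s := by
  simpa [Measure.restrict_apply (hf _)] using
    sum_measure_preimage_singleton (μ := μ.restrict s) Finset.univ fun j _ => hf j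

section Dilation

variable {m : ℕ} {f : ℝ → ZMod m} {r : ℝ}

theorem volume_preimage_succ_inter_Ioc (hr : 0 < r) (hf : ∀ x > 0, f (r * x) = f x + 1)
    (j : ZMod m) :
    volume (f ⁻¹' {j + 1} ∩ Ioc 0 1) = ENNReal.ofReal r * volume (f ⁻¹' {j} ∩ Ioc 0 r⁻¹) := by
  have hset : f ⁻¹' {j + 1} ∩ Ioc 0 1 = (r⁻¹ * ·) ⁻¹' (f ⁻¹' {j} ∩ Ioc 0 r⁻¹) := by
    ext x
    simp only [mem_inter_iff, mem_preimage, mem_singleton_iff, mem_Ioc]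
    by_cases hx : 0 < x
    · have h := hf (r⁻¹ * x) (by positivity)
      rw [mul_inv_cancel_left₀ hr.ne'] at h
      rw [h, add_left_inj, mul_le_iff_le_one_right (inv_pos.2 hr)]
      simp [hx, hr]
    · have : ¬ 0 < r⁻¹ * x := fun h => hx (pos_of_mul_pos_right h (inv_pos.2 hr).le)
      simp [hx, this]
  rw [hset, Real.volume_preimage_mul_left (inv_ne_zero hr.ne'), inv_inv, abs_of_pos hr]

theorem abs_volume_real_preimage_succ_sub_le (hr : 1 ≤ r) (hf : ∀ x > 0, f (r * x) = f x + 1)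
    (j : ZMod m) :
    |volume.real (f ⁻¹' {j + 1} ∩ Ioc 0 1) - volume.real (f ⁻¹' {j} ∩ Ioc 0 1)| ≤ r - 1 := by
  have hr0 : 0 < r := one_pos.trans_le hr
  have hr1 : r⁻¹ ≤ 1 := inv_le_one_of_one_le₀ hr
  set u := volume.real (f ⁻¹' {j} ∩ Ioc 0 1)
  set v := volume.real (f ⁻¹' {j} ∩ Ioc 0 r⁻¹)
  have hsucc : volume.real (f ⁻¹' {j + 1} ∩ Ioc 0 1) = r * v := by
    simp only [measureReal_def, volume_preimage_succ_inter_Ioc hr0 hf, ENNReal.toReal_mul,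
      ENNReal.toReal_ofReal hr0.le, v]
  have hfin : volume (f ⁻¹' {j} ∩ Ioc 0 1) ≠ ⊤ :=
    measure_inter_lt_top_of_right_ne_top measure_Ioc_lt_top.ne |>.ne
  have hu1 : u ≤ 1 := by
    simpa using measureReal_mono inter_subset_right
      (measure_Ioc_lt_top (μ := volume) (a := (0 : ℝ)) (b := 1)).ne
  have hvu : v ≤ u := measureReal_mono (inter_subset_inter_right _ (Ioc_subset_Ioc_right hr1))
    hfin
  have huv : u ≤ v + (1 - r⁻¹) := by
    have hsub : f ⁻¹' {j} ∩ Ioc 0 1 ⊆ (f ⁻¹' {j} ∩ Ioc 0 r⁻¹) ∪ Ioc r⁻¹ 1 := by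
      rintro x ⟨hx, hx0, hx1⟩
      by_cases h : x ≤ r⁻¹
      · exact Or.inl ⟨hx, hx0, h⟩
      · exact Or.inr ⟨not_le.1 h, hx1⟩
    calc u ≤ volume.real ((f ⁻¹' {j} ∩ Ioc 0 r⁻¹) ∪ Ioc r⁻¹ 1) := measureReal_mono hsub
            (measure_union_lt_top (measure_inter_lt_top_of_right_ne_top measure_Ioc_lt_top.ne)
              measure_Ioc_lt_top).ne
      _ ≤ v + volume.real (Ioc r⁻¹ 1) := measureReal_union_le _ _
      _ = v + (1 - r⁻¹) := by rw [Real.volume_real_Ioc_of_le hr1]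
  have hrv : r * (1 - r⁻¹) = r - 1 := by field_simp
  rw [hsucc, abs_le]
  constructor <;> nlinarith [measureReal_nonneg (μ := volume) (s := f ⁻¹' {j} ∩ Ioc 0 1)]

theorem abs_volume_real_preimage_inter_Ioc_sub_one_div_le [NeZero m]
    (hmeas : ∀ j, MeasurableSet (f ⁻¹' {j})) (hr : 1 ≤ r) (hf : ∀ x > 0, f (r * x) = f x + 1)
    (j : ZMod m) :
    |volume.real (f ⁻¹' {j} ∩ Ioc 0 1) - 1 / m| ≤ m * (r - 1) := by
  refine ZMod.abs_sub_one_div_le_of_abs_succ_sub_le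
    (u := fun j => volume.real (f ⁻¹' {j} ∩ Ioc 0 1)) ?_
    (abs_volume_real_preimage_succ_sub_le hr hf) j
  have h := congrArg ENNReal.toReal (sum_measure_preimage_singleton_inter volume hmeas (Ioc 0 1))
  rwa [ENNReal.toReal_sum fun j _ =>
      (measure_inter_lt_top_of_right_ne_top measure_Ioc_lt_top.ne).ne,
    Real.volume_Ioc, sub_zero, ENNReal.toReal_ofReal zero_le_one] at h

end Dilation

theorem Int.fract_mem_Ico_div_iff_floor_mul_cast_eq {m a : ℕ} (ha : a < m) (θ : ℝ) :
    Int.fract θ ∈ Ico ((a : ℝ) / m) (((a : ℝ) + 1) / m) ↔ ((⌊m * θ⌋ : ℤ) : ZMod m) = a := by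
  have hm : (0 : ℝ) < m := mod_cast (Nat.zero_le a).trans_lt ha
  have hsplit : ⌊m * θ⌋ = ⌊m * Int.fract θ⌋ + m * ⌊θ⌋ := by
    rw [← Int.floor_add_intCast, Int.fract]; push_cast; ring_nf
  have hlow : 0 ≤ ⌊m * Int.fract θ⌋ := Int.floor_nonneg.2 (by positivity)
  have hhigh : ⌊m * Int.fract θ⌋ < m := Int.floor_lt.2 (by
    push_cast; nlinarith [Int.fract_lt_one θ])
  rw [← Int.cast_natCast (R := ZMod m) a, ZMod.intCast_eq_intCast_iff', hsplit,
    Int.add_mul_emod_self_left, Int.emod_eq_of_lt hlow hhigh,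
    Int.emod_eq_of_lt (by positivity) (by exact_mod_cast ha),
    Int.floor_eq_iff, mem_Ico, div_le_iff₀' hm, lt_div_iff₀' hm]
  push_cast
  rfl

theorem floor_mul_log_mul_exp_mul {m : ℕ} (hm : m ≠ 0) {T N : ℝ} (hT : T ≠ 0) (hN : N ≠ 0)
    {x : ℝ} (hx : x ≠ 0) :
    ⌊m * (T * log (N * (exp (2 * π / T / m) * x)) / (2 * π))⌋ =
      ⌊m * (T * log (N * x) / (2 * π))⌋ + 1 := by
  rw [mul_left_comm, log_mul (exp_ne_zero _) (mul_ne_zero hN hx), log_exp, ← Int.floor_add_one]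
  congr 1
  field_simp
  ring

theorem Real.exp_sub_one_le_mul_exp (s : ℝ) : exp s - 1 ≤ s * exp s := by
  nlinarith [add_one_le_exp (-s), exp_neg s, exp_pos s, mul_inv_cancel₀ (exp_pos s).ne']

theorem Real.mul_exp_div_sub_one_le {t M : ℝ} (ht : 0 ≤ t) (hM : 1 ≤ M) :
    M * (exp (t / M) - 1) ≤ t * exp t := by
  have hM0 : 0 < M := one_pos.trans_le hM
  calc M * (exp (t / M) - 1) ≤ M * (t / M * exp (t / M)) := by
        gcongr; exact exp_sub_one_le_mul_exp _
    _ = t * exp (t / M) := by field_simp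
    _ ≤ t * exp t := by gcongr; exact div_le_self ht hM

/-- For `T₁ > 2`, `N ≥ 2`, `0 ≤ a₁ < m`, the Lebesgue measure of
`{x ∈ [0,1] : (Nx)^{iT₁} ∈ e([a₁/m,(a₁+1)/m))}` equals `1/m + O(1/T₁)` with an
absolute implied constant; membership means the fractional part of
`T₁ log(Nx) / (2π)` lies in `[a₁/m, (a₁+1)/m)`. -/
theorem measure_equidistribution_one :
    ∃ C : ℝ, 0 < C ∧ ∀ (T₁ : ℝ) (N m a₁ : ℕ),
      2 < T₁ → 2 ≤ N → 0 < m → a₁ < m →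
      |(volume {x : ℝ | x ∈ Set.Icc (0 : ℝ) 1 ∧
          Int.fract (T₁ * Real.log (N * x) / (2 * π)) ∈
            Set.Ico ((a₁ : ℝ) / m) (((a₁ : ℝ) + 1) / m)}).toReal - 1 / m|
        ≤ C * (1 / T₁) := by
  refine ⟨2 * π * exp π, by positivity, fun T₁ N m a₁ hT hN hm ha => ?_⟩
  have : NeZero m := ⟨hm.ne'⟩
  have hT₁ : 0 < T₁ := by linarith
  set t := 2 * π / T₁
  let f : ℝ → ZMod m := fun x => ((⌊m * (T₁ * log (N * x) / (2 * π))⌋ : ℤ) : ZMod m)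
  have hmeas : ∀ j, MeasurableSet (f ⁻¹' {j}) := fun j =>
    (Int.measurable_floor.comp (by fun_prop)) (MeasurableSet.of_discrete (s := Int.cast ⁻¹' {j}))
  have hshift : ∀ x > 0, f (exp (t / m) * x) = f x + 1 := fun x hx => by
    simp only [f, t, floor_mul_log_mul_exp_mul hm.ne' hT₁.ne'
      (Nat.cast_ne_zero.2 (by omega : N ≠ 0)) hx.ne', Int.cast_add, Int.cast_one]
  have hset : {x : ℝ | x ∈ Icc (0 : ℝ) 1 ∧ Int.fract (T₁ * log (N * x) / (2 * π)) ∈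
      Ico ((a₁ : ℝ) / m) (((a₁ : ℝ) + 1) / m)} = f ⁻¹' {(a₁ : ZMod m)} ∩ Icc 0 1 := by
    ext x
    simp [f, Int.fract_mem_Ico_div_iff_floor_mul_cast_eq ha, and_comm]
  rw [hset, measure_congr (Filter.EventuallyEq.rfl.inter Ioc_ae_eq_Icc).symm]
  calc |volume.real (f ⁻¹' {(a₁ : ZMod m)} ∩ Ioc 0 1) - 1 / m|
    _ ≤ m * (exp (t / m) - 1) :=
      abs_volume_real_preimage_inter_Ioc_sub_one_div_le hmeas (one_le_exp (by positivity)) hshift _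
    _ ≤ t * exp t := mul_exp_div_sub_one_le (by positivity) (mod_cast hm)
    _ ≤ t * exp π := by
      gcongr
      rw [div_le_iff₀ hT₁]; nlinarith [pi_pos]
    _ = 2 * π * exp π * (1 / T₁) := by ring
end

section
/- If S ⊆ ℕ satisfies d({n : 1_{n∈S} ≠ 1_{pn∈S}}) = 0 for every prime p, then d({n : 1_{n∈S} ≠ 1_{mn∈S}}) = 0 for every positive integer m. -/
open Classical in
/-- The number of elements of `A` in `[1, N]`. -/
noncomputable def countIn (A : Set ℕ) (N : ℕ) : ℕ :=
  ((Finset.Icc 1 N).filter (fun n => n ∈ A)).card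

/-- `A ⊆ ℕ` has natural density `d`. -/
def HasNatDensity (A : Set ℕ) (d : ℝ) : Prop :=
  Filter.Tendsto (fun N : ℕ => (countIn A N : ℝ) / N) Filter.atTop (nhds d)

/-! Membership of `n` and `a * b * n` in `S` can disagree only if membership of `n` and `b * n`
does, or membership of `b * n` and `a * (b * n)` does. The latter set of `n` is the preimage of a
null set under `n ↦ b * n`; its count up to `N` is at most the count of the null set up to `b * N`,
so it is null as well. Hence the `m` with null disagreement set form a multiplicative monoid, and
it contains every prime. -/

open Classical in
theorem countIn_mono {A B : Set ℕ} (hAB : A ⊆ B) (N : ℕ) : countIn A N ≤ countIn B N :=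
  Finset.card_le_card <| Finset.monotone_filter_right _ fun _ _ hn => hAB hn

open Classical in
theorem countIn_union_le (A B : Set ℕ) (N : ℕ) :
    countIn (A ∪ B) N ≤ countIn A N + countIn B N := by
  unfold countIn
  simp only [Set.mem_union, Finset.filter_or]
  exact Finset.card_union_le _ _

open Classical in
theorem countIn_preimage_mul_le (D : Set ℕ) {m : ℕ} (hm : 0 < m) (N : ℕ) :
    countIn ((m * ·) ⁻¹' D) N ≤ countIn D (m * N) := by
  apply Finset.card_le_card_of_injOn (m * ·)
  · intro n hn
    simp only [Finset.coe_filter, Finset.mem_Icc, Set.mem_ofPred_eq] at hn ⊢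
    exact ⟨⟨Nat.mul_pos hm hn.1.1, Nat.mul_le_mul_left m hn.1.2⟩, hn.2⟩
  · exact fun a _ b _ hab => Nat.eq_of_mul_eq_mul_left hm hab

theorem hasNatDensity_empty : HasNatDensity ∅ 0 := by
  simp [HasNatDensity, countIn]

namespace HasNatDensity

variable {A B : Set ℕ}

theorem zero_of_subset (hB : HasNatDensity B 0) (hAB : A ⊆ B) : HasNatDensity A 0 := by
  refine squeeze_zero (fun N => by positivity) (fun N => ?_) hB
  gcongr
  exact_mod_cast countIn_mono hAB N

theorem union_zero (hA : HasNatDensity A 0) (hB : HasNatDensity B 0) :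
    HasNatDensity (A ∪ B) 0 := by
  refine squeeze_zero (fun N => by positivity) (fun N => ?_) (by simpa using hA.add hB)
  rw [← add_div]
  gcongr
  exact_mod_cast countIn_union_le A B N

theorem preimage_mul_zero (hA : HasNatDensity A 0) {m : ℕ} (hm : 0 < m) :
    HasNatDensity ((m * ·) ⁻¹' A) 0 := by
  have hmN : Filter.Tendsto (m * ·) Filter.atTop Filter.atTop :=
    Filter.tendsto_id.const_mul_atTop' hm
  have hlim : Filter.Tendsto (fun N : ℕ => (m : ℝ) * ((countIn A (m * N) : ℝ) / (m * N)))
      Filter.atTop (nhds 0) := by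
    simpa using (hA.comp hmN).const_mul (m : ℝ)
  refine squeeze_zero (fun N => by positivity) (fun N => ?_) hlim
  have hm' : (m : ℝ) ≠ 0 := by positivity
  rw [← mul_div_assoc, mul_div_mul_left _ _ hm']
  gcongr
  exact_mod_cast countIn_preimage_mul_le A hm N

end HasNatDensity

def disagreement (S : Set ℕ) (m : ℕ) : Set ℕ := {n | (n ∈ S) ≠ (m * n ∈ S)}

theorem disagreement_one (S : Set ℕ) : disagreement S 1 = ∅ := by
  simp [disagreement]

theorem disagreement_mul_subset (S : Set ℕ) (a b : ℕ) :
    disagreement S (a * b) ⊆ disagreement S b ∪ (b * ·) ⁻¹' disagreement S a := by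
  intro n hn
  simp only [disagreement, Set.mem_union, Set.mem_preimage, Set.mem_ofPred_eq, mul_assoc] at hn ⊢
  tauto

/-- If the disagreement set of `S` under multiplication by `p` has density `0` for every
prime `p`, then it has density `0` for every positive integer `m`. -/
theorem stable_for_primes_implies_all (S : Set ℕ)
    (h : ∀ p : ℕ, p.Prime → HasNatDensity {n : ℕ | (n ∈ S) ≠ (p * n ∈ S)} 0) :
    ∀ m : ℕ, 0 < m → HasNatDensity {n : ℕ | (n ∈ S) ≠ (m * n ∈ S)} 0 := by
  change ∀ m : ℕ, 0 < m → HasNatDensity (disagreement S m) 0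
  intro m
  induction m using Nat.recOnMul with
  | zero => exact fun h0 => absurd h0 (lt_irrefl 0)
  | one => exact fun _ => (disagreement_one S).symm ▸ hasNatDensity_empty
  | prime p hp => exact fun _ => h p hp
  | mul a b ha hb =>
    intro hab
    have ha0 : 0 < a := Nat.pos_of_mul_pos_right hab
    have hb0 : 0 < b := Nat.pos_of_mul_pos_left hab
    exact ((hb hb0).union_zero ((ha ha0).preimage_mul_zero hb0)).zero_of_subset
      (disagreement_mul_subset S a b)
end
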